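/- Let I(g) = ∫₀^T ∫₀^{t₁} g(t₁)g(t₂) sin 2(t₁ - t₂) dt₂ dt₁ for T ≥ π. For g₂(t) = cos(4t)·χ_{[0,π]}(t), I(g₂) = -π/12. -/

import Mathlib

/-!
For `t₁ ≤ π` the inner integral is a Duhamel integral of `cos 4·` against `sin 2·`, which equals
`(cos 2t₁ - cos 4t₁) / 6`; for `t₁ > π` the factor `g t₁` vanishes, so the outer integral stops at
`π`. What remains, `∫₀^π cos 4t (cos 2t - cos 4t) / 6 dt`, is `-(1/6) ∫₀^π cos² 4t dt = -π/12` by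
orthogonality of `cos 2t` and `cos 4t` on `[0, π]`.
-/

open Real Set intervalIntegral

theorem integral_cos_mul_sin_sub {a b : ℝ} (hsub : a - b ≠ 0) (hadd : a + b ≠ 0) (t : ℝ) :
    ∫ s in (0 : ℝ)..t, cos (a * s) * sin (b * (t - s))
      = b * (cos (a * t) - cos (b * t)) / (b ^ 2 - a ^ 2) := by
  have hderiv : ∀ s, HasDerivAt
      (fun s => (cos ((a + b) * s - b * t) / (a + b) - cos (b * t + (a - b) * s) / (a - b)) / 2)
      (cos (a * s) * sin (b * (t - s))) s := by
    intro s
    have h₁ := (((hasDerivAt_id s).const_mul (a + b)).sub_const (b * t)).cos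
    have h₂ := (((hasDerivAt_id s).const_mul (a - b)).const_add (b * t)).cos
    refine (((h₁.div_const (a + b)).sub (h₂.div_const (a - b))).div_const 2).congr_deriv ?_
    -- product to sum: `2 sin X cos Y = sin (X + Y) + sin (X - Y)` with `X = b (t - s)`, `Y = a s`
    have e₁ : (a + b) * s - b * t = a * s - b * (t - s) := by ring
    have e₂ : b * t + (a - b) * s = b * (t - s) + a * s := by ring
    simp only [id, mul_one, e₁, e₂, sin_sub, sin_add]
    field_simp
    ring
  rw [integral_eq_sub_of_hasDerivAt (fun s _ => hderiv s)
    (Continuous.intervalIntegrable (by fun_prop) _ _)]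
  have hsq : b ^ 2 - a ^ 2 ≠ 0 := by
    rw [sq_sub_sq]; exact mul_ne_zero (by contrapose! hadd; linarith) (by contrapose! hsub; linarith)
  rw [show (a + b) * t - b * t = a * t by ring, show b * t + (a - b) * t = a * t by ring]
  simp only [mul_zero, zero_sub, add_zero, cos_neg]
  field_simp
  ring

theorem integral_cos_four_mul_cos_two_sub_cos_four :
    ∫ t in (0 : ℝ)..π, cos (4 * t) * ((cos (2 * t) - cos (4 * t)) / 6) = -(π / 12) := by
  have hderiv : ∀ t, HasDerivAt
      (fun t => sin (6 * t) / 72 + sin (2 * t) / 24 - sin (8 * t) / 96 - t / 12)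
      (cos (4 * t) * ((cos (2 * t) - cos (4 * t)) / 6)) t := by
    intro t
    have h₆ := ((hasDerivAt_id t).const_mul 6).sin
    have h₂ := ((hasDerivAt_id t).const_mul 2).sin
    have h₈ := ((hasDerivAt_id t).const_mul 8).sin
    refine ((((h₆.div_const 72).add (h₂.div_const 24)).sub (h₈.div_const 96)).sub
      ((hasDerivAt_id t).div_const 12)).congr_deriv ?_
    have c₆ : cos (6 * t) = cos (4 * t) * cos (2 * t) - sin (4 * t) * sin (2 * t) := by
      rw [← cos_add]; ring_nf
    have c₂ : cos (2 * t) = cos (4 * t) * cos (2 * t) + sin (4 * t) * sin (2 * t) := by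
      rw [← cos_sub]; ring_nf
    have c₈ : cos (8 * t) = 2 * cos (4 * t) ^ 2 - 1 := by
      rw [show (8 : ℝ) * t = 2 * (4 * t) by ring, cos_two_mul]
    simp only [id, mul_one]
    rw [c₆, c₈]
    linear_combination (1 / 12 : ℝ) * c₂
  rw [integral_eq_sub_of_hasDerivAt (fun t _ => hderiv t)
    (Continuous.intervalIntegrable (by fun_prop) _ _)]
  have hsin (n : ℕ) : sin (n * π) = 0 := sin_nat_mul_pi n
  norm_num [show sin (6 * π) = 0 by exact_mod_cast hsin 6,
    show sin (2 * π) = 0 by exact_mod_cast hsin 2, show sin (8 * π) = 0 by exact_mod_cast hsin 8]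

theorem integral_integral_indicator_Icc (f : ℝ → ℝ) (K : ℝ → ℝ → ℝ) {c T : ℝ}
    (hc : 0 ≤ c) (hcT : c ≤ T) :
    ∫ t₁ in (0 : ℝ)..T, ∫ t₂ in (0 : ℝ)..t₁,
        (Icc 0 c).indicator f t₁ * (Icc 0 c).indicator f t₂ * K t₁ t₂
      = ∫ t₁ in (0 : ℝ)..c, ∫ t₂ in (0 : ℝ)..t₁, f t₁ * f t₂ * K t₁ t₂ := by
  rw [← integral_indicator (f := fun t₁ => ∫ t₂ in (0 : ℝ)..t₁, f t₁ * f t₂ * K t₁ t₂) ⟨hc, hcT⟩]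
  refine integral_congr fun t₁ ht₁ => ?_
  rw [uIcc_of_le (hc.trans hcT)] at ht₁
  by_cases hle : t₁ ≤ c
  · rw [indicator_of_mem (show t₁ ∈ {x | x ≤ c} from hle)]
    refine integral_congr fun t₂ ht₂ => ?_
    rw [uIcc_of_le ht₁.1] at ht₂
    simp only [indicator_of_mem (show t₁ ∈ Icc 0 c from ⟨ht₁.1, hle⟩),
      indicator_of_mem (show t₂ ∈ Icc 0 c from ⟨ht₂.1, ht₂.2.trans hle⟩)]
  · simp [hle]

theorem stmt_12 (T : ℝ) (hT : Real.pi ≤ T)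
    (g : ℝ → ℝ)
    (hg : g = Set.indicator (Set.Icc 0 Real.pi) (fun t => Real.cos (4 * t))) :
    (∫ t₁ in (0 : ℝ)..T, ∫ t₂ in (0 : ℝ)..t₁,
        g t₁ * g t₂ * Real.sin (2 * (t₁ - t₂))) = -(Real.pi / 12) := by
  subst hg
  rw [integral_integral_indicator_Icc _ (fun t₁ t₂ => sin (2 * (t₁ - t₂))) pi_pos.le hT,
    ← integral_cos_four_mul_cos_two_sub_cos_four]
  refine integral_congr fun t _ => ?_
  have hinner := integral_cos_mul_sin_sub (a := 4) (b := 2) (by norm_num) (by norm_num) t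
  simp only [mul_assoc, integral_const_mul, hinner]
  ring
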